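/- Let L be a 2-trivial Lie algebra over a field K of characteristic zero and let I be an ideal of L of codimension 1. Then I is a direct summand of L: there exists x′ ∈ L with x′ ∉ I such that L = I ⊕ Kx′ and [I, x′] = 0; in particular L is the direct sum of the ideal I and the one-dimensional ideal Kx′. -/

import Mathlib

universe u v

section TwoCohomology

variable (K : Type u) [Field K]
variable (L : Type v) [LieRing L] [LieAlgebra K L]

/-- `f` is an alternating bilinear 2-cocycle on `L` with values in the `L`-module `V`:
it satisfies `f a a = 0` and the Chevalley–Eilenberg 2-cocycle identity. -/
def IsLieTwoCocycle {V : Type*} [AddCommGroup V] [Module K V] [LieRingModule L V]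
    (f : L →ₗ[K] L →ₗ[K] V) : Prop :=
  (∀ a : L, f a a = 0) ∧
    ∀ x y z : L,
      ⁅x, f y z⁆ - ⁅y, f x z⁆ + ⁅z, f x y⁆ - f ⁅x, y⁆ z + f ⁅x, z⁆ y - f ⁅y, z⁆ x = 0

/-- `f` is a 2-coboundary: `f (x, y) = x · g y − y · g x − g ⁅x, y⁆` for some linear `g`. -/
def IsLieTwoCoboundary {V : Type*} [AddCommGroup V] [Module K V] [LieRingModule L V]
    (f : L →ₗ[K] L →ₗ[K] V) : Prop :=
  ∃ g : L →ₗ[K] V, ∀ x y : L, f x y = ⁅x, g y⁆ - ⁅y, g x⁆ - g ⁅x, y⁆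

/-- A finite-dimensional Lie algebra `L` is 2-trivial if `H²(L,V) = 0`, i.e. every
alternating 2-cocycle is a 2-coboundary, for every finite-dimensional `L`-module `V`. -/
def IsTwoTrivial : Prop :=
  ∀ (V : Type u) [AddCommGroup V] [Module K V] [LieRingModule L V] [LieModule K L V]
    [FiniteDimensional K V] (f : L →ₗ[K] L →ₗ[K] V),
      IsLieTwoCocycle K L f → IsLieTwoCoboundary K L f

end TwoCohomology

/-!
Pick `χ : L → K` with kernel `I` and `x` with `χ x = 1`, so that `L = I ⊕ K x` and `ad x`
restricts to a derivation `δ` of `I`. For every derivation `D` of `I`, the 2-cochain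
`(a, b) ↦ χ a • D (p b) - χ b • D (p a)`, where `p` is the projection onto `I` along `x`, is a
cocycle with values in the `L`-module `I`. Writing it as the coboundary of `g : L → I` exhibits
`g|_I` as a derivation `E` of `I` with `D = [δ, E] + ad (g x)`. Thus `ad δ` is surjective, hence
injective, on the finite-dimensional Lie algebra `Der I / ad I` of outer derivations; as
`[δ, δ] = 0`, the class of `δ` vanishes. So `δ = ad i` for some `i ∈ I`, and `x - i` centralizes
`I`.
-/

section Transport

variable {R : Type*} [CommRing R] {L : Type*} [LieRing L] [LieAlgebra R L]
  {V W : Type*} [AddCommGroup V] [Module R V] [AddCommGroup W] [Module R W] [LieRingModule L V]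

variable (L) in
abbrev LinearEquiv.lieRingModule (e : V ≃ₗ[R] W) : LieRingModule L W where
  bracket a w := e ⁅a, e.symm w⁆
  add_lie a b w := by simp only [add_lie, map_add]
  lie_add a w w' := by simp only [map_add, lie_add]
  leibniz_lie a b w := by rw [e.symm_apply_apply, e.symm_apply_apply, ← map_add, leibniz_lie]

lemma LinearEquiv.lieModule [LieModule R L V] (e : V ≃ₗ[R] W) :
    letI := e.lieRingModule L
    LieModule R L W :=
  letI := e.lieRingModule L
  { smul_lie t a w := by simp only [Bracket.bracket, smul_lie, map_smul]
    lie_smul t a w := by simp only [Bracket.bracket, map_smul, lie_smul] }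

end Transport

section TwoTrivial

variable {K : Type u} [Field K] {L : Type v} [LieRing L] [LieAlgebra K L]
  {V W : Type*} [AddCommGroup V] [Module K V] [AddCommGroup W] [Module K W] [LieRingModule L V]

lemma IsLieTwoCocycle.compr₂_linearEquiv {f : L →ₗ[K] L →ₗ[K] V} (hf : IsLieTwoCocycle K L f)
    (e : V ≃ₗ[K] W) :
    letI := e.lieRingModule L
    IsLieTwoCocycle K L (f.compr₂ e.toLinearMap) := by
  let _ := e.lieRingModule L
  have hbr (a : L) (w : W) : ⁅a, w⁆ = e ⁅a, e.symm w⁆ := rfl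
  refine ⟨fun a ↦ by simp [hf.1 a], fun a b c ↦ ?_⟩
  simp only [LinearMap.compr₂_apply, LinearEquiv.coe_coe, hbr, LinearEquiv.symm_apply_apply,
    ← map_sub, ← map_add, hf.2 a b c, map_zero]

/-- `IsTwoTrivial` only quantifies over modules in the universe of `K`; a cocycle with values in
an arbitrary finite-dimensional module is transported to `Fin n → K`. -/
lemma IsTwoTrivial.isLieTwoCoboundary (hL : IsTwoTrivial K L) [LieModule K L V]
    [FiniteDimensional K V] {f : L →ₗ[K] L →ₗ[K] V} (hf : IsLieTwoCocycle K L f) :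
    IsLieTwoCoboundary K L f := by
  let e := (Module.finBasis K V).equivFun
  let _ := e.lieRingModule L
  have _ := e.lieModule (L := L)
  obtain ⟨g, hg⟩ := hL _ _ (hf.compr₂_linearEquiv e)
  refine ⟨e.symm.toLinearMap ∘ₗ g, fun a b ↦ e.injective ?_⟩
  simp only [map_sub, LinearMap.comp_apply, LinearEquiv.coe_coe, LinearEquiv.apply_symm_apply]
  exact hg a b

end TwoTrivial

lemma LieAlgebra.eq_zero_of_ad_surjective {R M : Type*} [CommRing R] [LieRing M] [LieAlgebra R M]
    [Module.Finite R M] {a : M} (h : Function.Surjective (LieAlgebra.ad R M a)) : a = 0 :=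
  OrzechProperty.injective_of_surjective_endomorphism _ h (by simp)

lemma Submodule.exists_ker_eq_of_finrank_quotient_eq_one {K V : Type*} [DivisionRing K]
    [AddCommGroup V] [Module K V] {p : Submodule K V} (h : Module.finrank K (V ⧸ p) = 1) :
    ∃ χ : V →ₗ[K] K, LinearMap.ker χ = p ∧ Function.Surjective χ := by
  have : FiniteDimensional K (V ⧸ p) := Module.finite_of_finrank_eq_succ h
  let e := LinearEquiv.ofFinrankEq (V ⧸ p) K (by rw [h, Module.finrank_self])
  exact ⟨e.toLinearMap ∘ₗ p.mkQ, by rw [LinearEquiv.ker_comp, Submodule.ker_mkQ],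
    e.surjective.comp p.mkQ_surjective⟩

def LinearMap.wedge {R N M : Type*} [CommRing R] [AddCommGroup N] [Module R N] [AddCommGroup M]
    [Module R M] (χ : N →ₗ[R] R) (φ : N →ₗ[R] M) : N →ₗ[R] N →ₗ[R] M :=
  (LinearMap.lsmul R M).compl₁₂ χ φ - ((LinearMap.lsmul R M).compl₁₂ χ φ).flip

@[simp] lemma LinearMap.wedge_apply {R N M : Type*} [CommRing R] [AddCommGroup N] [Module R N]
    [AddCommGroup M] [Module R M] (χ : N →ₗ[R] R) (φ : N →ₗ[R] M) (a b : N) :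
    χ.wedge φ a b = χ a • φ b - χ b • φ a :=
  rfl

namespace LieIdeal

section CommRing

variable {R : Type*} [CommRing R] {L : Type*} [LieRing L] [LieAlgebra R L]

def adDerivation (I : LieIdeal R L) (x : L) : LieDerivation R I I where
  toLinearMap := LieModule.toEnd R L I x
  leibniz' u v := by
    ext
    show ⁅x, ⁅(u : L), (v : L)⁆⁆ = ⁅(u : L), ⁅x, (v : L)⁆⁆ - ⁅(v : L), ⁅x, (u : L)⁆⁆
    rw [leibniz_lie, ← lie_skew (v : L)]
    abel

@[simp] lemma coe_adDerivation_apply (I : LieIdeal R L) (x : L) (u : I) :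
    ((I.adDerivation x u : I) : L) = ⁅x, (u : L)⁆ :=
  rfl

variable {I : LieIdeal R L} {χ : L →ₗ[R] R} {x : L}

lemma mem_iff_of_ker_eq (hχ : LinearMap.ker χ = I.toSubmodule) {a : L} : a ∈ I ↔ χ a = 0 := by
  rw [← LieSubmodule.mem_toSubmodule, ← hχ, LinearMap.mem_ker]

def projOfKerEq (hχ : LinearMap.ker χ = I.toSubmodule) (hx : χ x = 1) : L →ₗ[R] I :=
  (LinearMap.id - χ.smulRight x).codRestrict I.toSubmodule fun a ↦ by
    simp [mem_iff_of_ker_eq hχ, hx]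

lemma coe_projOfKerEq_apply (hχ : LinearMap.ker χ = I.toSubmodule) (hx : χ x = 1) (a : L) :
    (projOfKerEq hχ hx a : L) = a - χ a • x :=
  rfl

lemma projOfKerEq_add_smul (hχ : LinearMap.ker χ = I.toSubmodule) (hx : χ x = 1) (a : L) :
    (projOfKerEq hχ hx a : L) + χ a • x = a := by
  rw [coe_projOfKerEq_apply, sub_add_cancel]

lemma projOfKerEq_coe (hχ : LinearMap.ker χ = I.toSubmodule) (hx : χ x = 1) (u : I) :
    projOfKerEq hχ hx u = u := by
  ext
  simp [coe_projOfKerEq_apply, (mem_iff_of_ker_eq hχ).mp u.2]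

lemma lie_mem_of_ker_eq (hχ : LinearMap.ker χ = I.toSubmodule) (hx : χ x = 1) (a b : L) :
    ⁅a, b⁆ ∈ I := by
  rw [← projOfKerEq_add_smul hχ hx a, ← projOfKerEq_add_smul hχ hx b]
  simp only [lie_add, add_lie, lie_smul, smul_lie, lie_self, smul_zero, add_zero]
  refine add_mem (add_mem ?_ ?_) ?_
  · exact lie_mem_left R L I _ _ (projOfKerEq hχ hx a).2
  · exact I.smul_mem _ (lie_mem_right R L I _ _ (projOfKerEq hχ hx b).2)
  · exact I.smul_mem _ (lie_mem_left R L I _ _ (projOfKerEq hχ hx a).2)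

lemma lie_eq_projOfKerEq_lie_add (hχ : LinearMap.ker χ = I.toSubmodule) (hx : χ x = 1) (a : L)
    (m : I) : ⁅a, m⁆ = ⁅(projOfKerEq hχ hx a : L), m⁆ + χ a • ⁅x, m⁆ := by
  conv_lhs => rw [← projOfKerEq_add_smul hχ hx a]
  rw [add_lie, smul_lie]

lemma projOfKerEq_lie (hχ : LinearMap.ker χ = I.toSubmodule) (hx : χ x = 1) (a b : L) :
    projOfKerEq hχ hx ⁅a, b⁆ = ⁅(projOfKerEq hχ hx a : L), projOfKerEq hχ hx b⁆
      + χ a • ⁅x, projOfKerEq hχ hx b⁆ - χ b • ⁅x, projOfKerEq hχ hx a⁆ := by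
  ext
  rw [coe_projOfKerEq_apply, (mem_iff_of_ker_eq hχ).mp (lie_mem_of_ker_eq hχ hx a b), zero_smul,
    sub_zero]
  conv_lhs => rw [← projOfKerEq_add_smul hχ hx a, ← projOfKerEq_add_smul hχ hx b]
  simp only [lie_add, add_lie, lie_smul, smul_lie, lie_self, smul_zero, add_zero,
    LieSubmodule.coe_sub, LieSubmodule.coe_add, LieSubmodule.coe_smul, LieSubmodule.coe_bracket]
  rw [← lie_skew (projOfKerEq hχ hx a : L) x]
  module

end CommRing

variable {K : Type u} [Field K] {L : Type v} [LieRing L] [LieAlgebra K L]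
  {I : LieIdeal K L} {χ : L →ₗ[K] K} {x : L}

lemma isLieTwoCocycle_wedge (hχ : LinearMap.ker χ = I.toSubmodule) (hx : χ x = 1)
    (D : LieDerivation K I I) :
    IsLieTwoCocycle K L (χ.wedge (D.toLinearMap ∘ₗ projOfKerEq hχ hx)) := by
  refine ⟨fun a ↦ sub_self _, fun a b c ↦ ?_⟩
  have hχ_lie (a b : L) : χ ⁅a, b⁆ = 0 := (mem_iff_of_ker_eq hχ).mp (lie_mem_of_ker_eq hχ hx a b)
  have hD (u v : I) : D ⁅(u : L), v⁆ = ⁅(u : L), D v⁆ - ⁅(v : L), D u⁆ := D.apply_lie_eq_sub u v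
  simp only [LinearMap.wedge_apply, LinearMap.comp_apply, LieDerivation.coeFn_coe, hχ_lie,
    zero_smul, zero_sub, projOfKerEq_lie, map_add, map_sub, map_smul, hD, lie_sub, lie_smul,
    lie_eq_projOfKerEq_lie_add hχ hx a, lie_eq_projOfKerEq_lie_add hχ hx b,
    lie_eq_projOfKerEq_lie_add hχ hx c]
  module

lemma exists_eq_lie_adDerivation_add_ad [FiniteDimensional K L] (h2 : IsTwoTrivial K L)
    (hχ : LinearMap.ker χ = I.toSubmodule) (hx : χ x = 1) (D : LieDerivation K I I) :
    ∃ (E : LieDerivation K I I) (i : I), D = ⁅I.adDerivation x, E⁆ + LieDerivation.ad K I i := by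
  obtain ⟨g, hg⟩ := h2.isLieTwoCoboundary (isLieTwoCocycle_wedge hχ hx D)
  have hχ_mem (u : I) : χ u = 0 := (mem_iff_of_ker_eq hχ).mp u.2
  let E : LieDerivation K I I :=
    { toLinearMap := g ∘ₗ I.toSubmodule.subtype
      leibniz' u v := by
        have := hg u v
        simp only [LinearMap.wedge_apply, hχ_mem, zero_smul, sub_self] at this
        exact (sub_eq_zero.mp this.symm).symm }
  refine ⟨E, g x, LieDerivation.ext fun v ↦ ?_⟩
  have := hg x v
  simp only [LinearMap.wedge_apply, hx, LinearMap.coe_comp, LieDerivation.coeFn_coe,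
    Function.comp_apply, projOfKerEq_coe, one_smul, hχ_mem, zero_smul, sub_zero] at this
  rw [LieDerivation.add_apply, LieDerivation.commutator_apply, this]
  ext
  simp only [AddSubgroupClass.coe_sub, LieSubmodule.coe_bracket, LieDerivation.ad_apply_apply,
    coe_bracket_of_module, LieSubmodule.coe_add, coe_adDerivation_apply]
  rw [← lie_skew (g x : L) (v : L)]
  change _ = ⁅x, (g (v : L) : L)⁆ - (g ⁅x, (v : L)⁆ : L) + _
  abel

lemma adDerivation_mem_idealRange_ad [FiniteDimensional K L] (h2 : IsTwoTrivial K L)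
    (hχ : LinearMap.ker χ = I.toSubmodule) (hx : χ x = 1) :
    I.adDerivation x ∈ (LieDerivation.ad K I).idealRange := by
  let J := (LieDerivation.ad K I).idealRange
  rw [← LieSubmodule.Quotient.mk_eq_zero]
  apply LieAlgebra.eq_zero_of_ad_surjective (R := K)
  intro q
  obtain ⟨D, rfl⟩ := LieSubmodule.Quotient.surjective_mk' J q
  obtain ⟨E, i, rfl⟩ := exists_eq_lie_adDerivation_add_ad h2 hχ hx D
  refine ⟨LieSubmodule.Quotient.mk' J E, ?_⟩
  have hi : LieDerivation.ad K I i ∈ J := LieDerivation.mem_ad_idealRange_iff.mpr ⟨i, rfl⟩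
  rw [LieAlgebra.ad_apply, map_add, (LieSubmodule.Quotient.mk_eq_zero _).mpr hi, add_zero]
  exact (LieSubmodule.Quotient.mk_bracket _ _ _).symm

end LieIdeal

theorem codim_one_ideal_is_direct_summand_general
    (K : Type u) (L : Type v) [Field K]
    [LieRing L] [LieAlgebra K L] [FiniteDimensional K L]
    (I : LieIdeal K L) (hcodim : Module.finrank K (L ⧸ I.toSubmodule) = 1)
    (h2 : IsTwoTrivial K L) :
    ∃ x' : L, x' ∉ I ∧ IsCompl I.toSubmodule (Submodule.span K {x'}) ∧
      ∀ y ∈ I, ⁅y, x'⁆ = (0 : L) := by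
  obtain ⟨χ, hχ, hχ_surj⟩ := Submodule.exists_ker_eq_of_finrank_quotient_eq_one hcodim
  obtain ⟨x, hx⟩ := hχ_surj 1
  obtain ⟨i, hi⟩ :=
    LieDerivation.mem_ad_idealRange_iff.mp (I.adDerivation_mem_idealRange_ad h2 hχ hx)
  have hx' : χ (x - i) = 1 := by rw [map_sub, hx, (I.mem_iff_of_ker_eq hχ).mp i.2, sub_zero]
  have hx'_notMem : x - i ∉ I := by rw [I.mem_iff_of_ker_eq hχ, hx']; exact one_ne_zero
  refine ⟨x - i, hx'_notMem, ?_, fun y hy ↦ ?_⟩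
  · rw [← hχ]
    exact Submodule.isCompl_span_singleton_of_isCoatom_of_notMem
      (LinearMap.isCoatom_ker_of_surjective hχ_surj) (by simp [hx'])
  · have hiy : ⁅(i : L), y⁆ = ⁅x, y⁆ := by
      simpa using congr_arg Subtype.val (LieDerivation.congr_fun hi ⟨y, hy⟩)
    rw [← lie_skew, sub_lie, hiy, sub_self, neg_zero]

/-- An ideal of codimension 1 in a 2-trivial Lie algebra is a direct summand: there is
`x' ∈ L`, `x' ∉ I`, with `L = I ⊕ K∙x'` and `⁅I, x'⁆ = 0`; in particular `L` is the direct
sum of the ideal `I` and the one-dimensional ideal `K∙x'`. -/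
theorem codim_one_ideal_is_direct_summand
    (K : Type u) (L : Type v) [Field K] [CharZero K]
    [LieRing L] [LieAlgebra K L] [FiniteDimensional K L]
    (I : LieIdeal K L) (hcodim : Module.finrank K (L ⧸ I.toSubmodule) = 1)
    (h2 : IsTwoTrivial K L) :
    ∃ x' : L, x' ∉ I ∧ IsCompl I.toSubmodule (Submodule.span K {x'}) ∧
      ∀ y ∈ I, ⁅y, x'⁆ = (0 : L) :=
  codim_one_ideal_is_direct_summand_general K L I hcodim h2
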